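/- Any clean C² closed plane curve whose image is centrally symmetric about a point c is reparametrized by the central reflection: there exists a diffeomorphism φ of S¹ with 2c − α(t) = α(φ(t)) for all t. -/

import Mathlib

open Real Set

open Filter Topology Asymptotics

/-!
Call `s` a mirror of `t` if `α s = 2c - α t` and the tangents at `s` and `t` are parallel.
Limits of preimages of `2c - α tₙ`, `tₙ → t`, are mirrors of `t`: the reflected branch through
`α t` is tangent to the branch of `α` it converges to. Cleanness makes the mirror unique modulo
`L`, so near `t₀` the reflection of `α t` has a preimage close to a given mirror `s₀` of `t₀`, and
the inverse function theorem for `τ ↦ ⟪α τ, α' s₀⟫` turns this into a local `C¹` lift `ψ` with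
`α ∘ ψ = 2c - α`. Every local lift has derivative `-⟪α' t, α' s⟫ / ‖α' s‖²` at `t`, for any mirror
`s` of `t`; this is a continuous function of `t` alone, and its primitive through a mirror of `0`
is a global lift, the set where it is one being clopen. Finally `φ (t + L) - φ t` and
`φ (φ t) - t` are continuous with values in `Lℤ`, hence constant, which forces
`φ (t + L) = φ t ± L`.
-/

def det2 (v w : ℝ × ℝ) : ℝ := v.1 * w.2 - v.2 * w.1

def dot2 (v w : ℝ × ℝ) : ℝ := v.1 * w.1 + v.2 * w.2

theorem det2_swap (v w : ℝ × ℝ) : det2 w v = -det2 v w := by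
  simp only [det2]; ring

theorem det2_smul_right_self (v : ℝ × ℝ) (a : ℝ) : det2 v (a • v) = 0 := by
  simp only [det2, Prod.smul_fst, Prod.smul_snd, smul_eq_mul]; ring

theorem det2_eq_zero_trans {u v w : ℝ × ℝ} (hv : v ≠ 0) (huv : det2 u v = 0)
    (hwv : det2 w v = 0) : det2 u w = 0 := by
  simp only [det2] at huv hwv ⊢
  have h₁ : (u.1 * w.2 - u.2 * w.1) * v.1 = 0 := by linear_combination w.1 * huv - u.1 * hwv
  have h₂ : (u.1 * w.2 - u.2 * w.1) * v.2 = 0 := by linear_combination w.2 * huv - u.2 * hwv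
  by_contra h
  exact hv (Prod.ext ((mul_eq_zero.1 h₁).resolve_left h) ((mul_eq_zero.1 h₂).resolve_left h))

theorem LinearIndependent.det2_ne_zero {v w : ℝ × ℝ} (h : LinearIndependent ℝ ![v, w]) :
    det2 v w ≠ 0 := by
  intro hvw
  have hw : w ≠ 0 := by simpa using h.ne_zero 1
  rw [LinearIndependent.pair_iff] at h
  have h₁ := h w.2 (-v.2) (by ext <;> simp [det2] at hvw ⊢ <;> linarith)
  have h₂ := h (-w.1) v.1 (by ext <;> simp [det2] at hvw ⊢ <;> linarith)
  exact hw (Prod.ext (neg_eq_zero.1 h₂.1) h₁.1)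

theorem dot2_self_pos {v : ℝ × ℝ} (hv : v ≠ 0) : 0 < dot2 v v := by
  have : v.1 ≠ 0 ∨ v.2 ≠ 0 := by
    by_contra! h
    exact hv (Prod.ext h.1 h.2)
  simp only [dot2]
  rcases this with h | h <;> nlinarith [mul_self_pos.2 h, mul_self_nonneg v.1, mul_self_nonneg v.2]

theorem eq_dot2_div_of_smul_eq {v w : ℝ × ℝ} {d : ℝ} (hw : w ≠ 0) (h : d • w = v) :
    d = dot2 v w / dot2 w w := by
  rw [eq_div_iff (dot2_self_pos hw).ne', ← h]
  simp only [dot2, Prod.smul_fst, Prod.smul_snd, smul_eq_mul]; ring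

theorem HasDerivAt.dot2_const {f : ℝ → ℝ × ℝ} {f' : ℝ × ℝ} {x : ℝ} (hf : HasDerivAt f f' x)
    (v : ℝ × ℝ) : HasDerivAt (fun t => dot2 (f t) v) (dot2 f' v) x := by
  have h₁ := (ContinuousLinearMap.fst ℝ ℝ ℝ).hasFDerivAt.comp_hasDerivAt x hf
  have h₂ := (ContinuousLinearMap.snd ℝ ℝ ℝ).hasFDerivAt.comp_hasDerivAt x hf
  exact (h₁.mul_const v.1).add (h₂.mul_const v.2)

theorem det2_eq_zero_of_tendsto {ι : Type*} {l : Filter ι} [l.NeBot] {f g : ℝ → ℝ × ℝ}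
    {a b : ℝ} {f' g' : ℝ × ℝ} (hf : HasDerivAt f f' a) (hf' : f' ≠ 0) (hg : HasDerivAt g g' b)
    {s t : ι → ℝ} (hs : Tendsto s l (𝓝 a)) (ht : Tendsto t l (𝓝[≠] b))
    (heq : ∀ᶠ i in l, f (s i) - f a = g (t i) - g b) : det2 g' f' = 0 := by
  have ht' : Tendsto t l (𝓝 b) := ht.mono_right nhdsWithin_le_nhds
  have hst : (fun i => s i - a) =O[l] fun i => t i - b :=
    calc (fun i => s i - a) =O[l] fun i => f (s i) - f a :=
          ((HasDerivAtFilter.isTheta_sub hf hf').isBigO_symm.comp_tendsto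
            (hs.prodMk tendsto_const_pure) :)
      _ =O[l] fun i => t i - b :=
          (hg.isBigO_sub.comp_tendsto ht').congr' (heq.mono fun _ h => h.symm)
            (.of_forall fun _ => rfl)
  set E := fun i => f (s i) - f a - (s i - a) • f'
  have hE : E =o[l] fun i => t i - b :=
    ((hasDerivAt_iff_isLittleO.1 hf).comp_tendsto hs).trans_isBigO hst
  have hdet : Continuous (det2 · f') := by unfold det2; fun_prop
  have hlim₁ : Tendsto (fun i => det2 ((t i - b)⁻¹ • E i) f') l (𝓝 0) := by
    simpa [det2, Function.comp_def] using (hdet.tendsto 0).comp hE.tendsto_inv_smul_nhds_zero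
  have hlim₂ : Tendsto (fun i => det2 (slope g b (t i)) f') l (𝓝 (det2 g' f')) :=
    (hdet.tendsto g').comp ((hasDerivAt_iff_tendsto_slope.1 hg).comp ht)
  refine tendsto_nhds_unique (hlim₂.congr' (heq.mono fun i h => ?_)) hlim₁
  simp only [slope_def_module, ← h, E, det2, Prod.smul_fst, Prod.smul_snd, Prod.fst_sub,
    Prod.snd_sub, smul_eq_mul]
  ring

theorem exists_int_forall_eq_mul_of_continuous {f : ℝ → ℝ} (hf : Continuous f) {L : ℝ}
    (h : ∀ t, ∃ k : ℤ, f t = k * L) : ∃ k : ℤ, ∀ t, f t = k * L := by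
  have hdiscrete : IsDiscrete (AddSubgroup.zmultiples L : Set ℝ) :=
    isDiscrete_iff_discreteTopology.2
      (inferInstanceAs (DiscreteTopology (AddSubgroup.zmultiples L)))
  obtain ⟨k, hk⟩ := h 0
  refine ⟨k, fun t => (isPreconnected_univ.constant_of_mapsTo hdiscrete hf.continuousOn
    (fun x _ => ?_) (mem_univ t) (mem_univ 0)).trans hk⟩
  obtain ⟨j, hj⟩ := h x
  exact ⟨j, by simp [hj]⟩

theorem Function.Periodic.deriv {E : Type*} [NormedAddCommGroup E] [NormedSpace ℝ E]
    {f : ℝ → E} {L : ℝ} (h : Function.Periodic f L) : Function.Periodic (deriv f) L := fun t => by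
  rw [← deriv_comp_add_const, h.funext]

structure IsImmersedLoop (α : ℝ → ℝ × ℝ) (L : ℝ) : Prop where
  period_pos : 0 < L
  periodic : Function.Periodic α L
  contDiff : ContDiff ℝ 1 α
  deriv_ne_zero : ∀ t, deriv α t ≠ 0

def IsClean (α : ℝ → ℝ × ℝ) (L : ℝ) : Prop :=
  ∀ s t : ℝ, α s = α t → (∀ k : ℤ, s - t ≠ k * L) → LinearIndependent ℝ ![deriv α s, deriv α t]

def IsMirror (α : ℝ → ℝ × ℝ) (c : ℝ × ℝ) (t s : ℝ) : Prop :=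
  α s = (2:ℝ) • c - α t ∧ det2 (deriv α s) (deriv α t) = 0

section

variable {α : ℝ → ℝ × ℝ} {L : ℝ} {c : ℝ × ℝ}

namespace IsMirror

theorem symm {t s : ℝ} (h : IsMirror α c t s) : IsMirror α c s t :=
  ⟨by rw [h.1, sub_sub_cancel], by rw [det2_swap, h.2, neg_zero]⟩

theorem exists_sub_eq_int_mul (hclean : IsClean α L) (himm : ∀ t, deriv α t ≠ 0) {t s₁ s₂ : ℝ}
    (h₁ : IsMirror α c t s₁) (h₂ : IsMirror α c t s₂) : ∃ k : ℤ, s₁ - s₂ = k * L := by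
  by_contra! hk
  exact (hclean s₁ s₂ (h₁.1.trans h₂.1.symm) hk).det2_ne_zero
    (det2_eq_zero_trans (himm t) h₁.2 h₂.2)

theorem deriv_eq (hper : Function.Periodic α L) (hclean : IsClean α L)
    (himm : ∀ t, deriv α t ≠ 0) {t s₁ s₂ : ℝ} (h₁ : IsMirror α c t s₁) (h₂ : IsMirror α c t s₂) :
    deriv α s₁ = deriv α s₂ := by
  obtain ⟨k, hk⟩ := h₁.exists_sub_eq_int_mul hclean himm h₂
  rw [show s₁ = s₂ + k * L by linarith, hper.deriv.int_mul k]

end IsMirror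

theorem isMirror_of_tendsto (hα : Differentiable ℝ α) {t₀ τ : ℝ} (hτ : deriv α τ ≠ 0)
    {l : Filter ℝ} [l.NeBot] (hl : l ≤ 𝓝[≠] t₀) {u : ℝ → ℝ} (hu : Tendsto u l (𝓝 τ))
    (heq : ∀ᶠ t in l, α (u t) = (2:ℝ) • c - α t) : IsMirror α c t₀ τ := by
  have hl' : Tendsto id l (𝓝[≠] t₀) := tendsto_id.mono_left hl
  have hατ : α τ = (2:ℝ) • c - α t₀ :=
    tendsto_nhds_unique ((hα.continuous.tendsto τ).comp hu)
      ((((continuous_const.sub hα.continuous).tendsto t₀).comp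
        (hl'.mono_right nhdsWithin_le_nhds)).congr' (heq.mono fun t h => h.symm))
  refine ⟨hατ, ?_⟩
  have := det2_eq_zero_of_tendsto (hα τ).hasDerivAt hτ ((hα t₀).hasDerivAt.const_sub ((2:ℝ) • c))
    hu hl' (heq.mono fun t h => by simp [h, hατ])
  simp only [det2, Prod.fst_neg, Prod.snd_neg] at this ⊢
  linarith

theorem smul_deriv_eq_neg_of_eventuallyEq (hα : Differentiable ℝ α) {ψ : ℝ → ℝ} {d t : ℝ}
    (hψ : HasDerivAt ψ d t) (h : ∀ᶠ x in 𝓝 t, α (ψ x) = (2:ℝ) • c - α x) :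
    d • deriv α (ψ t) = -deriv α t :=
  ((hα (ψ t)).hasDerivAt.scomp t hψ).unique
    (((hα t).hasDerivAt.const_sub _).congr_of_eventuallyEq h)

theorem isMirror_of_smul_eq_neg {t s d : ℝ} (h : α s = (2:ℝ) • c - α t)
    (hd : d • deriv α s = -deriv α t) : IsMirror α c t s :=
  ⟨h, by rw [← neg_neg (deriv α t), ← hd, ← neg_smul]; exact det2_smul_right_self _ _⟩

namespace IsImmersedLoop

theorem differentiable (hα : IsImmersedLoop α L) : Differentiable ℝ α :=
  hα.contDiff.differentiable one_ne_zero

theorem continuous_deriv (hα : IsImmersedLoop α L) : Continuous (deriv α) :=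
  (contDiff_one_iff_deriv.1 hα.contDiff).2

theorem isMirror_add_period_iff (hα : IsImmersedLoop α L) {t s : ℝ} :
    IsMirror α c (t + L) s ↔ IsMirror α c t s := by
  simp only [IsMirror, hα.periodic t, hα.periodic.deriv t]

theorem exists_isMirror_frequently (hα : IsImmersedLoop α L)
    (hsymm : ∀ t, (2:ℝ) • c - α t ∈ range α) {t₀ : ℝ} {l : Filter ℝ} [l.NeBot]
    (hl : l ≤ 𝓝[≠] t₀) :
    ∃ τ, IsMirror α c t₀ τ ∧ ∀ U ∈ 𝓝 τ, ∃ᶠ t in l, ∃ u ∈ U, α u = (2:ℝ) • c - α t := by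
  have hfold : ∀ t, ∃ u ∈ Icc 0 L, α u = (2:ℝ) • c - α t := fun t => by
    obtain ⟨s, hs⟩ := hsymm t
    obtain ⟨u, hu, hsu⟩ := hα.periodic.exists_mem_Ico₀ hα.period_pos s
    exact ⟨u, Ico_subset_Icc_self hu, hsu ▸ hs⟩
  choose u hu hαu using hfold
  obtain ⟨τ, -, hτ⟩ := isCompact_Icc.exists_clusterPt (f := map u l)
    (tendsto_principal.2 (.of_forall hu))
  have : (comap u (𝓝 τ) ⊓ l).NeBot := by
    rw [← map_neBot_iff u, Filter.push_pull']
    exact hτ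
  refine ⟨τ, isMirror_of_tendsto hα.differentiable (hα.deriv_ne_zero τ) (inf_le_right.trans hl)
    (tendsto_comap.mono_left inf_le_left) (.of_forall hαu), fun U hU => ?_⟩
  exact (MapClusterPt.frequently hτ hU).mono fun t ht => ⟨u t, ht, hαu t⟩

theorem exists_isMirror (hα : IsImmersedLoop α L) (hsymm : ∀ t, (2:ℝ) • c - α t ∈ range α)
    (t₀ : ℝ) : ∃ s, IsMirror α c t₀ s :=
  (hα.exists_isMirror_frequently hsymm (l := 𝓝[≠] t₀) le_rfl).imp fun _ h => h.1

theorem eventually_exists_dist_lt (hα : IsImmersedLoop α L) (hclean : IsClean α L)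
    (hsymm : ∀ t, (2:ℝ) • c - α t ∈ range α) {t₀ s₀ : ℝ} (h : IsMirror α c t₀ s₀) {δ : ℝ}
    (hδ : 0 < δ) : ∀ᶠ t in 𝓝 t₀, ∃ u, dist u s₀ < δ ∧ α u = (2:ℝ) • c - α t := by
  set P := fun t => ∃ u, dist u s₀ < δ ∧ α u = (2:ℝ) • c - α t
  by_contra hP
  have : (𝓝 t₀ ⊓ 𝓟 {t | ¬ P t}).NeBot := frequently_iff_neBot.1 (not_eventually.1 hP)
  have hl : 𝓝 t₀ ⊓ 𝓟 {t | ¬ P t} ≤ 𝓝[≠] t₀ :=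
    inf_le_inf_left _ (principal_mono.2 fun t ht (hne : t = t₀) =>
      ht (hne ▸ ⟨s₀, by simpa using hδ, h.1⟩))
  obtain ⟨τ, hτ, hfreq⟩ := hα.exists_isMirror_frequently hsymm hl
  obtain ⟨k, hk⟩ := hτ.exists_sub_eq_int_mul hclean hα.deriv_ne_zero h
  obtain ⟨t, ⟨u, hu, hαu⟩, ht⟩ := ((hfreq _ (Metric.ball_mem_nhds τ hδ)).and_eventually
    (mem_inf_of_right (mem_principal_self _))).exists
  refine ht ⟨u - k * L, ?_, by rw [hα.periodic.sub_int_mul_eq, hαu]⟩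
  rw [Metric.mem_ball, Real.dist_eq] at hu
  rwa [Real.dist_eq, show u - k * L - s₀ = u - τ by linarith]

theorem exists_local_lift (hα : IsImmersedLoop α L) (hclean : IsClean α L)
    (hsymm : ∀ t, (2:ℝ) • c - α t ∈ range α) {t₀ s₀ : ℝ} (h : IsMirror α c t₀ s₀) :
    ∃ ψ : ℝ → ℝ, ψ t₀ = s₀ ∧
      ∀ᶠ t in 𝓝 t₀, α (ψ t) = (2:ℝ) • c - α t ∧ DifferentiableAt ℝ ψ t := by
  set v := deriv α s₀
  set θ : ℝ → ℝ := fun τ => dot2 (α τ) v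
  have hθ : ∀ τ, HasDerivAt θ (dot2 (deriv α τ) v) τ := fun τ =>
    (hα.differentiable τ).hasDerivAt.dot2_const v
  have hv : dot2 v v ≠ 0 := (dot2_self_pos (hα.deriv_ne_zero s₀)).ne'
  have hstrict : HasStrictDerivAt θ (dot2 v v) s₀ :=
    ContDiffAt.hasStrictDerivAt' (n := 1)
      (by have := hα.contDiff; unfold θ dot2; fun_prop) (hθ s₀) one_ne_zero
  set Φ := (hstrict.hasStrictFDerivAt_equiv hv).toOpenPartialHomeomorph θ
  obtain ⟨δ, hδ, hball⟩ : ∃ δ > 0, Metric.ball s₀ δ ⊆ Φ.source ∩ {τ | dot2 (deriv α τ) v ≠ 0} :=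
    Metric.isOpen_iff.1 (Φ.open_source.inter (isOpen_ne_fun
      (by have := hα.continuous_deriv; unfold dot2; fun_prop) continuous_const))
      s₀ ⟨(hstrict.hasStrictFDerivAt_equiv hv).mem_toOpenPartialHomeomorph_source, hv⟩
  set η : ℝ → ℝ := fun t => dot2 ((2:ℝ) • c - α t) v
  refine ⟨fun t => Φ.symm (η t), ?_, ?_⟩
  · show Φ.symm (η t₀) = s₀
    rw [show η t₀ = θ s₀ by simp only [θ, η, h.1]]
    exact Φ.left_inv (hstrict.hasStrictFDerivAt_equiv hv).mem_toOpenPartialHomeomorph_source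
  filter_upwards [hα.eventually_exists_dist_lt hclean hsymm h hδ] with t ⟨u, hu, hαu⟩
  have hθu : θ u = η t := by simp only [θ, η, hαu]
  have hψ : Φ.symm (η t) = u := by rw [← hθu]; exact Φ.left_inv (hball hu).1
  have htarget : η t ∈ Φ.target := hθu ▸ Φ.map_source (hball hu).1
  refine ⟨hψ ▸ hαu, ?_⟩
  have hη : HasDerivAt η (dot2 (-deriv α t) v) t :=
    ((hα.differentiable t).hasDerivAt.const_sub _).dot2_const v
  exact ((Φ.hasDerivAt_symm htarget (hball hu).2 (hψ ▸ hθ u)).comp t hη).differentiableAt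

theorem exists_continuous_mirror_speed (hα : IsImmersedLoop α L) (hclean : IsClean α L)
    (hsymm : ∀ t, (2:ℝ) • c - α t ∈ range α) :
    ∃ g : ℝ → ℝ, Continuous g ∧ ∀ t₀ s₀, IsMirror α c t₀ s₀ →
      ∃ ψ : ℝ → ℝ, ψ t₀ = s₀ ∧ ∀ᶠ t in 𝓝 t₀, IsMirror α c t (ψ t) ∧ HasDerivAt ψ (g t) t := by
  choose σ hσ using hα.exists_isMirror hsymm
  set g : ℝ → ℝ := fun t =>
    dot2 (-deriv α t) (deriv α (σ t)) / dot2 (deriv α (σ t)) (deriv α (σ t))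
  have hlift : ∀ t₀ s₀, IsMirror α c t₀ s₀ → ∃ ψ : ℝ → ℝ, ψ t₀ = s₀ ∧
      ∀ᶠ t in 𝓝 t₀, IsMirror α c t (ψ t) ∧ HasDerivAt ψ (g t) t := by
    intro t₀ s₀ h
    obtain ⟨ψ, hψ₀, hψ⟩ := hα.exists_local_lift hclean hsymm h
    refine ⟨ψ, hψ₀, hψ.eventually_nhds.mono fun t ht => ?_⟩
    have hd := ht.self_of_nhds.2.hasDerivAt
    have hrel := smul_deriv_eq_neg_of_eventuallyEq hα.differentiable hd (ht.mono fun _ hx => hx.1)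
    have hmirror := isMirror_of_smul_eq_neg ht.self_of_nhds.1 hrel
    have hdg : deriv ψ t = g t := by
      rw [eq_dot2_div_of_smul_eq (hα.deriv_ne_zero _) hrel,
        hmirror.deriv_eq hα.periodic hclean hα.deriv_ne_zero (hσ t)]
    exact ⟨hmirror, hdg ▸ hd⟩
  refine ⟨g, continuous_iff_continuousAt.2 fun t₀ => ?_, hlift⟩
  obtain ⟨ψ, -, hψ⟩ := hlift t₀ (σ t₀) (hσ t₀)
  have hψc : ContinuousAt (fun t => deriv α (ψ t)) t₀ :=
    hα.continuous_deriv.continuousAt.comp hψ.self_of_nhds.2.continuousAt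
  have hα' := hα.continuous_deriv.continuousAt (x := t₀)
  refine ContinuousAt.congr ?_ (hψ.mono fun t ht => ?_ : (fun t => dot2 (-deriv α t)
    (deriv α (ψ t)) / dot2 (deriv α (ψ t)) (deriv α (ψ t))) =ᶠ[𝓝 t₀] g)
  · exact ContinuousAt.div (by unfold dot2; fun_prop) (by unfold dot2; fun_prop)
      (dot2_self_pos (hα.deriv_ne_zero _)).ne'
  · simp only [g, (hσ t).deriv_eq hα.periodic hclean hα.deriv_ne_zero ht.1]

theorem exists_mirror_reparam (hα : IsImmersedLoop α L) (hclean : IsClean α L)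
    (hsymm : ∀ t, (2:ℝ) • c - α t ∈ range α) :
    ∃ φ : ℝ → ℝ, ContDiff ℝ 1 φ ∧ (∀ t, deriv φ t ≠ 0) ∧ ∀ t, IsMirror α c t (φ t) := by
  obtain ⟨g, hg, hlift⟩ := hα.exists_continuous_mirror_speed hclean hsymm
  obtain ⟨s₀, hs₀⟩ := hα.exists_isMirror hsymm 0
  set φ : ℝ → ℝ := fun t => s₀ + ∫ x in (0:ℝ)..t, g x
  have hφ : ∀ t, HasDerivAt φ (g t) t := fun t =>
    (hg.integral_hasStrictDerivAt 0 t).hasDerivAt.const_add s₀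
  have hφg : deriv φ = g := funext fun t => (hφ t).deriv
  have hφc : Continuous φ := continuous_iff_continuousAt.2 fun t => (hφ t).continuousAt
  have hclosed : IsClosed {t | IsMirror α c t (φ t)} := by
    have := hα.contDiff.continuous
    have := hα.continuous_deriv
    simp only [IsMirror, ofPred_and]
    exact (isClosed_eq (by fun_prop) (by fun_prop)).inter
      (isClosed_eq (by unfold det2; fun_prop) continuous_const)
  have hopen : IsOpen {t | IsMirror α c t (φ t)} := by
    refine isOpen_iff_mem_nhds.2 fun t₀ ht₀ => ?_
    obtain ⟨ψ, hψ₀, hψ⟩ := hlift t₀ (φ t₀) ht₀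
    obtain ⟨ε, hε, hball⟩ := Metric.eventually_nhds_iff_ball.1 hψ
    have heq : EqOn φ ψ (Metric.ball t₀ ε) :=
      Metric.isOpen_ball.eqOn_of_deriv_eq (convex_ball _ _).isPreconnected
        (fun t _ => (hφ t).differentiableAt.differentiableWithinAt)
        (fun t ht => (hball t ht).2.differentiableAt.differentiableWithinAt)
        (fun t ht => (hφ t).deriv.trans (hball t ht).2.deriv.symm) (Metric.mem_ball_self hε)
        hψ₀.symm
    filter_upwards [Metric.ball_mem_nhds t₀ hε] with t ht
    simpa only [mem_ofPred_eq, heq ht] using (hball t ht).1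
  have hmirror := Set.eq_univ_iff_forall.1
    (IsClopen.eq_univ ⟨hclosed, hopen⟩ ⟨0, by simpa [φ] using hs₀⟩)
  refine ⟨φ, contDiff_one_iff_deriv.2 ⟨fun t => (hφ t).differentiableAt, hφg ▸ hg⟩,
    fun t hφt => ?_, hmirror⟩
  have hrel := smul_deriv_eq_neg_of_eventuallyEq hα.differentiable (hφg ▸ hφ t)
    (.of_forall fun x => (hmirror x).1)
  rw [hφt, zero_smul, eq_comm, neg_eq_zero] at hrel
  exact hα.deriv_ne_zero t hrel

theorem exists_int_forall_add_period (hα : IsImmersedLoop α L) (hclean : IsClean α L)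
    {φ : ℝ → ℝ} (hφ : Continuous φ) (h : ∀ t, IsMirror α c t (φ t)) :
    ∃ k : ℤ, ∀ t, φ (t + L) = φ t + k * L := by
  obtain ⟨k, hk⟩ := exists_int_forall_eq_mul_of_continuous (f := fun t => φ (t + L) - φ t)
    (by fun_prop) fun t =>
      (hα.isMirror_add_period_iff.1 (h (t + L))).exists_sub_eq_int_mul hclean hα.deriv_ne_zero (h t)
  exact ⟨k, fun t => by linarith [hk t]⟩

theorem exists_int_forall_comp_self (hα : IsImmersedLoop α L) (hclean : IsClean α L)
    {φ : ℝ → ℝ} (hφ : Continuous φ) (h : ∀ t, IsMirror α c t (φ t)) :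
    ∃ m : ℤ, ∀ t, φ (φ t) = t + m * L := by
  obtain ⟨m, hm⟩ := exists_int_forall_eq_mul_of_continuous (f := fun t => φ (φ t) - t)
    (by fun_prop) fun t =>
      (h (φ t)).exists_sub_eq_int_mul hclean hα.deriv_ne_zero (h t).symm
  exact ⟨m, fun t => by linarith [hm t]⟩

theorem mirror_add_period (hα : IsImmersedLoop α L) (hclean : IsClean α L) {φ : ℝ → ℝ}
    (hφ : Continuous φ) (h : ∀ t, IsMirror α c t (φ t)) :
    (∀ t, φ (t + L) = φ t + L) ∨ (∀ t, φ (t + L) = φ t - L) := by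
  obtain ⟨k, hk⟩ := hα.exists_int_forall_add_period hclean hφ h
  obtain ⟨m, hm⟩ := hα.exists_int_forall_comp_self hclean hφ h
  have hshift : Function.Periodic (fun x => φ x - k * x) L := fun x => by
    simp only [hk]; ring
  have hkk : ∀ x, φ (x + k * L) = φ x + k * k * L := fun x => by
    linarith [hshift.int_mul k x]
  have hsq : (k : ℝ) * k = 1 := by
    have h₁ := hm (0 + L)
    rw [hk, hkk, hm] at h₁
    exact mul_right_cancel₀ hα.period_pos.ne' (by linarith)
  rcases mul_self_eq_one_iff.1 hsq with h₁ | h₁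
  · exact Or.inl fun t => by rw [hk, h₁, one_mul]
  · exact Or.inr fun t => by rw [hk, h₁, neg_one_mul, sub_eq_add_neg]

end IsImmersedLoop

end

/-- A clean C² loop whose image is centrally symmetric about `c` is reparametrized by
the central reflection: `2c − α = α ∘ φ` for some C¹ diffeomorphism `φ` of the circle. -/
theorem stmt5 (L : ℝ) (hL : 0 < L) (α : ℝ → ℝ × ℝ) (c : ℝ × ℝ)
    (hper : Function.Periodic α L) (hC2 : ContDiff ℝ 2 α)
    (himm : ∀ t, deriv α t ≠ 0)
    (hclean : ∀ s t : ℝ, α s = α t → (∀ k : ℤ, s - t ≠ k * L) →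
      LinearIndependent ℝ ![deriv α s, deriv α t])
    (hcentral : (fun x : ℝ × ℝ => (2:ℝ) • c - x) '' Set.range α = Set.range α) :
    ∃ φ : ℝ → ℝ, ContDiff ℝ 1 φ ∧ (∀ t, deriv φ t ≠ 0) ∧
      ((∀ t, φ (t + L) = φ t + L) ∨ (∀ t, φ (t + L) = φ t - L)) ∧
      (∀ t, (2:ℝ) • c - α t = α (φ t)) := by
  have hα : IsImmersedLoop α L := ⟨hL, hper, hC2.of_le one_le_two, himm⟩
  have hsymm : ∀ t, (2:ℝ) • c - α t ∈ range α := fun t =>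
    hcentral ▸ mem_image_of_mem _ (mem_range_self t)
  obtain ⟨φ, hφ, hφ', hmirror⟩ := hα.exists_mirror_reparam hclean hsymm
  exact ⟨φ, hφ, hφ', hα.mirror_add_period hclean hφ.continuous hmirror,
    fun t => (hmirror t).1.symm⟩
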